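/- arXiv:2605.04957 — 2 statements merged into one kernel-verified Lean document; each statement's English description precedes it below -/
import Mathlib

section
/- Let r_1, ..., r_M, r_{test} be real-valued random variables that are exchangeable. Let q̂ be the ⌈(M+1)(1-α)⌉-th smallest value among r_1, ..., r_M for α ∈ (0,1) with ⌈(M+1)(1-α)⌉ ≤ M. Then P(r_{test} ≤ q̂) ≥ 1 - α. -/
open MeasureTheory

/-- A finite sequence of random variables is exchangeable if its joint law is
invariant under every permutation of the indices. -/
def Exchangeable {Ω : Type*} [MeasurableSpace Ω] {E : Type*} [MeasurableSpace E]
    (μ : Measure Ω) {n : ℕ} (X : Fin n → Ω → E) : Prop :=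
  ∀ σ : Equiv.Perm (Fin n),
    μ.map (fun ω => fun i => X (σ i) ω) = μ.map (fun ω => fun i => X i ω)

/-- The `k`-th smallest value among `f 0, …, f (M-1)` (order statistic, `k ≥ 1`). -/
noncomputable def orderStat {M : ℕ} (f : Fin M → ℝ) (k : ℕ) : ℝ :=
  sInf {t : ℝ | k ≤ Set.ncard {i : Fin M | f i ≤ t}}

/-! Write `X = (r 0, …, r (M-1), rtest)` and `k = ⌈(M+1)(1-α)⌉`. For every outcome, at least `k`
indices `j` have fewer than `k` entries of `X` strictly below `X j`: otherwise take the smallest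
`X j₀` among the failing indices, and the at least `k` entries below it are all non-failing. By
exchangeability these `M+1` events have equal probability, which is therefore at least
`k / (M+1) ≥ 1 - α`; the event for `j = last` forces `rtest ≤ q̂`. -/

open Finset
open scoped ENNReal

section countLt

variable {ι α : Type*} [Fintype ι] [LinearOrder α]

def countLt (x : ι → α) (a : α) : ℕ := #{i | x i < a}

theorem countLt_comp_perm (x : ι → α) (σ : Equiv.Perm ι) (a : α) :
    countLt (fun i => x (σ i)) a = countLt x a :=
  card_equiv σ fun i => by simp

theorem countLt_snoc_self {M : ℕ} (x : Fin M → α) (a : α) :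
    countLt (Fin.snoc x a : Fin (M + 1) → α) a = countLt x a := by
  simp only [countLt, card_filter, Fin.sum_univ_castSucc, Fin.snoc_castSucc, Fin.snoc_last,
    lt_irrefl, if_false, add_zero]

theorem le_card_countLt_lt (x : ι → α) {k : ℕ} (hk : k ≤ Fintype.card ι) :
    k ≤ #{j | countLt x (x j) < k} := by
  classical
  set T : Finset ι := {j | countLt x (x j) < k}
  by_cases hT : Tᶜ.Nonempty
  · obtain ⟨j₀, hj₀, hmin⟩ := Tᶜ.exists_min_image x hT
    have hk₀ : k ≤ countLt x (x j₀) := by simpa [T] using hj₀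
    refine hk₀.trans (card_le_card fun i hi => ?_)
    by_contra hiT
    exact (mem_filter.mp hi).2.not_ge (hmin i (mem_compl.mpr hiT))
  · rw [not_nonempty_iff_eq_empty, compl_eq_empty_iff] at hT
    rwa [hT, card_univ]

theorem measurable_countLt [MeasurableSpace α] [TopologicalSpace α] [OpensMeasurableSpace α]
    [OrderClosedTopology α] [SecondCountableTopology α] {δ : Type*} [MeasurableSpace δ]
    {f : δ → ι → α} {g : δ → α} (hf : ∀ i, Measurable fun ω => f ω i) (hg : Measurable g) :
    Measurable fun ω => countLt (f ω) (g ω) := by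
  simp only [countLt, card_filter]
  exact measurable_sum _ fun i _ =>
    Measurable.ite (measurableSet_lt (hf i) hg) measurable_const measurable_const

end countLt

theorem le_orderStat_of_countLt_lt {M k : ℕ} (hkM : k ≤ M) (f : Fin M → ℝ) {y : ℝ} (h : countLt f y < k) :
    y ≤ orderStat f k := by
  apply le_csInf
  · obtain ⟨b, hb⟩ := (Set.finite_range f).bddAbove
    have hall : {i | f i ≤ b} = Set.univ := Set.eq_univ_of_forall fun i => hb ⟨i, rfl⟩
    exact ⟨b, by simpa [hall] using hkM⟩
  · intro t ht
    by_contra! hty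
    have hle : Set.ncard {i | f i ≤ t} ≤ countLt f y := by
      rw [countLt, ← Set.ncard_coe_finset, coe_filter]
      exact Set.ncard_le_ncard (fun i hi => by simpa using lt_of_le_of_lt hi hty)
    exact (ht.trans hle).not_gt h

open Classical in
theorem natCast_mul_measure_univ_le_sum_measure {ι Ω : Type*} [MeasurableSpace Ω] (μ : Measure Ω)
    (s : Finset ι) {A : ι → Set Ω} (hA : ∀ j ∈ s, MeasurableSet (A j)) {k : ℕ}
    (hk : ∀ ω, k ≤ #{j ∈ s | ω ∈ A j}) :
    (k : ℝ≥0∞) * μ Set.univ ≤ ∑ j ∈ s, μ (A j) := by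
  calc (k : ℝ≥0∞) * μ Set.univ = ∫⁻ _, (k : ℝ≥0∞) ∂μ := (lintegral_const _).symm
    _ ≤ ∫⁻ ω, ∑ j ∈ s, (A j).indicator 1 ω ∂μ := lintegral_mono fun ω => by
        simpa [sum_indicator_eq_sum_filter] using hk ω
    _ = ∑ j ∈ s, μ (A j) := by
        rw [lintegral_finsetSum _ fun j hj => measurable_one.indicator (hA j hj)]
        exact sum_congr rfl fun j hj => lintegral_indicator_one (hA j hj)

theorem ENNReal.ofReal_le_natCeil_mul_div {n : ℕ} (hn : n ≠ 0) (x : ℝ) :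
    ENNReal.ofReal x ≤ ⌈(n : ℝ) * x⌉₊ / n := by
  rw [ENNReal.le_div_iff_mul_le (Or.inl (by simpa using hn)) (Or.inl (ENNReal.natCast_ne_top n)),
    ← ENNReal.ofReal_natCast n, ← ENNReal.ofReal_mul' (Nat.cast_nonneg n),
    ← ENNReal.ofReal_natCast ⌈_⌉₊]
  exact ENNReal.ofReal_le_ofReal (mul_comm x n ▸ Nat.le_ceil _)

namespace Exchangeable

variable {Ω E : Type*} [MeasurableSpace Ω] [MeasurableSpace E] {μ : Measure Ω} {n : ℕ}
  {X : Fin n → Ω → E}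

theorem measure_preimage_comp_perm (hX : Exchangeable μ X) (hXm : ∀ i, Measurable (X i))
    (σ : Equiv.Perm (Fin n)) {S : Set (Fin n → E)} (hS : MeasurableSet S) :
    μ ((fun ω i => X (σ i) ω) ⁻¹' S) = μ ((fun ω i => X i ω) ⁻¹' S) := by
  rw [← Measure.map_apply (measurable_pi_lambda _ fun i => hXm (σ i)) hS, hX σ,
    Measure.map_apply (measurable_pi_lambda _ hXm) hS]

variable [LinearOrder E] [TopologicalSpace E] [OpensMeasurableSpace E] [OrderClosedTopology E]
  [SecondCountableTopology E]

theorem measure_countLt_lt_eq (hX : Exchangeable μ X) (hXm : ∀ i, Measurable (X i)) (k : ℕ)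
    (i j : Fin n) :
    μ {ω | countLt (X · ω) (X i ω) < k} = μ {ω | countLt (X · ω) (X j ω) < k} := by
  have hS : MeasurableSet {x : Fin n → E | countLt x (x j) < k} :=
    measurable_countLt (f := id) measurable_pi_apply (measurable_pi_apply j) measurableSet_Iio
  calc μ {ω | countLt (X · ω) (X i ω) < k}
      = μ ((fun ω l => X (Equiv.swap i j l) ω) ⁻¹' {x | countLt x (x j) < k}) := by
        congr 1
        ext ω
        simp only [Set.mem_preimage, Set.mem_ofPred, Equiv.swap_apply_right]
        rw [countLt_comp_perm (X · ω)]
    _ = μ {ω | countLt (X · ω) (X j ω) < k} := hX.measure_preimage_comp_perm hXm _ hS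

theorem natCast_mul_measure_univ_le_mul_measure_countLt_lt (hX : Exchangeable μ X)
    (hXm : ∀ i, Measurable (X i)) {k : ℕ} (hk : k ≤ n) (j : Fin n) :
    (k : ℝ≥0∞) * μ Set.univ ≤ n * μ {ω | countLt (X · ω) (X j ω) < k} := by
  calc (k : ℝ≥0∞) * μ Set.univ ≤ ∑ i, μ {ω | countLt (X · ω) (X i ω) < k} :=
        natCast_mul_measure_univ_le_sum_measure μ _
          (fun i _ => measurable_countLt (fun l => hXm l) (hXm i) measurableSet_Iio)
          fun ω => by simpa using le_card_countLt_lt (X · ω) (by simpa using hk)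
    _ = n * μ {ω | countLt (X · ω) (X j ω) < k} := by
        simp [hX.measure_countLt_lt_eq hXm k _ j]

end Exchangeable

theorem split_conformal_coverage_general
    {Ω : Type*} [MeasurableSpace Ω] (μ : Measure Ω) [IsProbabilityMeasure μ]
    {M : ℕ} (r : Fin M → Ω → ℝ) (rtest : Ω → ℝ)
    (hr : ∀ i, Measurable (r i)) (hrt : Measurable rtest)
    (hexch : Exchangeable μ (Fin.snoc r rtest : Fin (M + 1) → Ω → ℝ))
    (α : ℝ)
    (hk : ⌈((M : ℝ) + 1) * (1 - α)⌉₊ ≤ M) :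
    ENNReal.ofReal (1 - α) ≤
      μ {ω | rtest ω ≤ orderStat (fun i => r i ω) ⌈((M : ℝ) + 1) * (1 - α)⌉₊} := by
  set k := ⌈((M : ℝ) + 1) * (1 - α)⌉₊
  set X : Fin (M + 1) → Ω → ℝ := Fin.snoc r rtest
  have hXm : ∀ i, Measurable (X i) :=
    Fin.lastCases (by simpa [X] using hrt) fun i => by simpa [X] using hr i
  have hrank := hexch.natCast_mul_measure_univ_le_mul_measure_countLt_lt hXm
    (hk.trans M.le_succ) (Fin.last M)
  have hevent : {ω | countLt (X · ω) (X (Fin.last M) ω) < k} ⊆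
      {ω | rtest ω ≤ orderStat (fun i => r i ω) k} := fun ω hω => by
    have hsnoc : (X · ω) = Fin.snoc (fun i => r i ω) (rtest ω) :=
      Fin.comp_snoc (fun f : Ω → ℝ => f ω) r rtest
    refine le_orderStat_of_countLt_lt hk _ ?_
    simpa [hsnoc, X, countLt_snoc_self] using hω
  calc ENNReal.ofReal (1 - α) ≤ k / (M + 1 : ℕ) := by
        simpa using ENNReal.ofReal_le_natCeil_mul_div M.succ_ne_zero (1 - α)
    _ ≤ μ {ω | countLt (X · ω) (X (Fin.last M) ω) < k} :=
        ENNReal.div_le_of_le_mul' (by simpa using hrank)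
    _ ≤ _ := measure_mono hevent

/-- Split conformal prediction coverage guarantee: if `r 0, …, r (M-1), rtest` are
exchangeable and `q̂` is the `⌈(M+1)(1-α)⌉`-th smallest of `r 0, …, r (M-1)`, with
`⌈(M+1)(1-α)⌉ ≤ M`, then `P(rtest ≤ q̂) ≥ 1 - α`. -/
theorem split_conformal_coverage
    {Ω : Type*} [MeasurableSpace Ω] (μ : Measure Ω) [IsProbabilityMeasure μ]
    {M : ℕ} (r : Fin M → Ω → ℝ) (rtest : Ω → ℝ)
    (hr : ∀ i, Measurable (r i)) (hrt : Measurable rtest)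
    (hexch : Exchangeable μ (Fin.snoc r rtest : Fin (M + 1) → Ω → ℝ))
    (α : ℝ) (hα : α ∈ Set.Ioo (0 : ℝ) 1)
    (hk : ⌈((M : ℝ) + 1) * (1 - α)⌉₊ ≤ M) :
    ENNReal.ofReal (1 - α) ≤
      μ {ω | rtest ω ≤ orderStat (fun i => r i ω) ⌈((M : ℝ) + 1) * (1 - α)⌉₊} :=
  split_conformal_coverage_general μ r rtest hr hrt hexch α hk
end

section
/- Suppose (H_1, ..., H_M, H_{test}) are real-valued and exchangeable conditional on a σ-algebra 𝒢. Let q̂ be the ⌈(M+1)(1-α)⌉-th order statistic of H_1, ..., H_M (a 𝒢 ∨ σ(H_1,...,H_M)-measurable random variable). Then P(H_{test} ≤ q̂ | 𝒢) ≥ 1 - α almost surely, and hence P(H_{test} ≤ q̂) ≥ 1 - α. -/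
open MeasureTheory
open Finset

lemma ncard_val_lt {n k : ℕ} (hk : k ≤ n) :
    Set.ncard {j : Fin n | (j : ℕ) < k} = k := by
  classical
  have : {j : Fin n | (j : ℕ) < k} = Set.range (Fin.castLE hk) := by
    ext j
    simp only [Set.mem_setOf_eq, Set.mem_range]
    constructor
    · intro hj; exact ⟨⟨j, hj⟩, rfl⟩
    · rintro ⟨i, rfl⟩; exact i.2
  rw [this, ← Set.image_univ, Set.ncard_image_of_injective _ (Fin.castLE_injective hk),
    Set.ncard_univ]
  simp

lemma le_orderStat_iff {M : ℕ} (f : Fin M → ℝ) {k : ℕ} (hk1 : 1 ≤ k) (hkM : k ≤ M)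
    (y : ℝ) : y ≤ orderStat f k ↔ Set.ncard {i : Fin M | f i < y} < k := by
  classical
  have hM : 0 < M := lt_of_lt_of_le hk1 hkM
  haveI : Nonempty (Fin M) := ⟨⟨0, hM⟩⟩
  set S := {t : ℝ | k ≤ Set.ncard {i : Fin M | f i ≤ t}} with hS
  obtain ⟨t0, ht0⟩ := Finite.exists_le f
  have hSne : S.Nonempty := by
    refine ⟨t0, ?_⟩
    have : {i : Fin M | f i ≤ t0} = Set.univ := by
      ext i; simp [ht0 i]
    simp only [hS, Set.mem_setOf_eq, this]
    rw [Set.ncard_univ]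
    simpa using hkM
  obtain ⟨b, hb⟩ := Finite.exists_le (fun i => OrderDual.toDual (f i))
  have hbdd : BddBelow S := by
    refine ⟨OrderDual.ofDual b, ?_⟩
    intro t ht
    have hpos : 0 < Set.ncard {i : Fin M | f i ≤ t} := lt_of_lt_of_le hk1 ht
    obtain ⟨i, hi⟩ := Set.nonempty_of_ncard_ne_zero hpos.ne'
    exact le_trans (hb i) hi
  constructor
  · intro hy
    by_contra hcon
    push_neg at hcon
    set T := {i : Fin M | f i < y} with hT
    have hTne : T.Nonempty := by
      apply Set.nonempty_of_ncard_ne_zero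
      omega
    have hTfin : T.Finite := Set.toFinite _
    obtain ⟨t1, ht1mem, ht1⟩ : ∃ a ∈ T, ∀ a' ∈ T, f a ≤ f a' → f a = f a' := by
      obtain ⟨a, ha, hmax⟩ := Set.Finite.exists_maximalFor f T hTfin hTne
      exact ⟨a, ha, fun a' h1 h2 => le_antisymm h2 (hmax h1 h2)⟩
    have hsub : T ⊆ {i : Fin M | f i ≤ f t1} := by
      intro i hi
      simp only [Set.mem_setOf_eq]
      by_contra h
      push_neg at h
      have := ht1 i hi (le_of_lt h)
      rw [this] at h
      exact lt_irrefl _ h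
    have : f t1 ∈ S := by
      simp only [hS, Set.mem_setOf_eq]
      exact le_trans hcon (Set.ncard_le_ncard hsub (Set.toFinite _))
    have := csInf_le hbdd this
    have hlt : f t1 < y := ht1mem
    exact absurd (lt_of_le_of_lt (le_trans hy this) hlt) (lt_irrefl _)
  · intro hcon
    apply le_csInf hSne
    intro t ht
    by_contra h
    push_neg at h
    have hsub : {i : Fin M | f i ≤ t} ⊆ {i : Fin M | f i < y} := by
      intro i hi; exact lt_of_le_of_lt hi h
    exact absurd (le_trans ht (Set.ncard_le_ncard hsub (Set.toFinite _))) (by omega)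

lemma many_low_rank {n : ℕ} (x : Fin n → ℝ) {k : ℕ} (hk : k ≤ n) :
    k ≤ Set.ncard {j : Fin n | Set.ncard {i : Fin n | x i < x j} < k} := by
  classical
  set σ := Tuple.sort x with hσ
  have hmono : Monotone (x ∘ σ) := Tuple.monotone_sort x
  have hsub : σ '' {j : Fin n | (j : ℕ) < k} ⊆
      {j : Fin n | Set.ncard {i : Fin n | x i < x j} < k} := by
    rintro _ ⟨j, hj, rfl⟩
    simp only [Set.mem_setOf_eq] at hj ⊢
    have heq : {i : Fin n | x i < x (σ j)} = σ '' {i : Fin n | x (σ i) < x (σ j)} := by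
      ext i
      constructor
      · intro hi; exact ⟨σ.symm i, by simpa using hi, by simp⟩
      · rintro ⟨i', hi', rfl⟩; exact hi'
    rw [heq, Set.ncard_image_of_injective _ σ.injective]
    have hsub2 : {i : Fin n | x (σ i) < x (σ j)} ⊆ {i : Fin n | (i : ℕ) < (j : ℕ)} := by
      intro i hi
      simp only [Set.mem_setOf_eq] at hi ⊢
      by_contra h
      push_neg at h
      exact absurd (hmono (show j ≤ i from h)) (not_le.mpr hi)
    calc Set.ncard {i : Fin n | x (σ i) < x (σ j)}
        ≤ Set.ncard {i : Fin n | (i : ℕ) < (j : ℕ)} :=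
          Set.ncard_le_ncard hsub2 (Set.toFinite _)
      _ = (j : ℕ) := ncard_val_lt (le_of_lt j.2)
      _ < k := hj
  calc k = Set.ncard {j : Fin n | (j : ℕ) < k} := (ncard_val_lt hk).symm
    _ = Set.ncard (σ '' {j : Fin n | (j : ℕ) < k}) :=
        (Set.ncard_image_of_injective _ σ.injective).symm
    _ ≤ _ := Set.ncard_le_ncard hsub (Set.toFinite _)

lemma ncard_setOf_eq_card_filter {n : ℕ} (P : Fin n → Prop) [DecidablePred P] :
    Set.ncard {i | P i} = (Finset.univ.filter P).card := by
  rw [← Set.ncard_coe_finset]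
  congr 1
  ext i; simp

lemma measurable_rank_event (n k : ℕ) (j0 : Fin n) :
    MeasurableSet {v : Fin n → ℝ | Set.ncard {i : Fin n | v i < v j0} < k} := by
  classical
  have heq : {v : Fin n → ℝ | Set.ncard {i : Fin n | v i < v j0} < k} =
      ⋂ (s : Finset (Fin n)) (_ : s.card = k), ⋃ i ∈ s, {v : Fin n → ℝ | v j0 ≤ v i} := by
    ext v
    simp only [Set.mem_setOf_eq, Set.mem_iInter, Set.mem_iUnion]
    constructor
    · intro hv s hs
      by_contra h
      push_neg at h
      have hsub : (↑s : Set (Fin n)) ⊆ {i : Fin n | v i < v j0} := by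
        intro i hi
        exact lt_of_not_ge (by exact_mod_cast fun hc => absurd hc (not_le.mpr (h i (by exact_mod_cast hi))))
      have := Set.ncard_le_ncard hsub (Set.toFinite _)
      rw [Set.ncard_coe_finset, hs] at this
      omega
    · intro hv
      by_contra h
      push_neg at h
      set T := {i : Fin n | v i < v j0} with hT
      have hcard : k ≤ T.toFinset.card := by
        rw [← Set.ncard_eq_toFinset_card']
        exact h
      obtain ⟨t, hts, htc⟩ := Finset.exists_subset_card_eq hcard
      obtain ⟨i, hit, hle⟩ := hv t htc
      have : v i < v j0 := by
        have := hts hit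
        rw [Set.mem_toFinset] at this
        exact this
      exact absurd hle (not_le.mpr this)
  rw [heq]
  refine MeasurableSet.iInter fun s => MeasurableSet.iInter fun _ => ?_
  refine MeasurableSet.biUnion s.countable_toSet fun i _ => ?_
  exact measurableSet_le (measurable_pi_apply j0) (measurable_pi_apply i)

/-- Conditional split conformal coverage: if `H 0, …, H (M-1), H M` are exchangeable
conditionally on a sub-σ-algebra `𝒢` (conditional laws of all permuted sequences
agree), and `q̂` is the `⌈(M+1)(1-α)⌉`-th order statistic of the first `M` variables,
then `P(H_test ≤ q̂ ∣ 𝒢) ≥ 1 - α` almost surely, and hence `P(H_test ≤ q̂) ≥ 1 - α`. -/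
theorem conditional_conformal_coverage
    {Ω : Type*} (m : MeasurableSpace Ω) {mΩ : MeasurableSpace Ω} (μ : Measure Ω) [IsProbabilityMeasure μ]
    (hm : m ≤ mΩ)
    {M : ℕ} (H : Fin (M + 1) → Ω → ℝ) (hH : ∀ i, Measurable (H i))
    (hexch : ∀ σ : Equiv.Perm (Fin (M + 1)), ∀ A : Set (Fin (M + 1) → ℝ),
      MeasurableSet A →
      μ[Set.indicator {ω | (fun i => H (σ i) ω) ∈ A} (fun _ => (1 : ℝ)) | m]
        =ᵐ[μ]
      μ[Set.indicator {ω | (fun i => H i ω) ∈ A} (fun _ => (1 : ℝ)) | m])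
    (α : ℝ) (hα : α ∈ Set.Ioo (0 : ℝ) 1)
    (hk : ⌈((M : ℝ) + 1) * (1 - α)⌉₊ ≤ M) :
    (fun _ => (1 - α : ℝ)) ≤ᵐ[μ]
        μ[Set.indicator
            {ω | H (Fin.last M) ω ≤
              orderStat (fun i : Fin M => H i.castSucc ω) ⌈((M : ℝ) + 1) * (1 - α)⌉₊}
            (fun _ => (1 : ℝ)) | m] ∧
      ENNReal.ofReal (1 - α) ≤
        μ {ω | H (Fin.last M) ω ≤
          orderStat (fun i : Fin M => H i.castSucc ω) ⌈((M : ℝ) + 1) * (1 - α)⌉₊} := by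
  classical
  letI : MeasurableSpace Ω := mΩ
  set k : ℕ := ⌈((M : ℝ) + 1) * (1 - α)⌉₊ with hkdef
  have hα0 : 0 < α := hα.1
  have hα1 : α < 1 := hα.2
  have hk1 : 1 ≤ k := by
    rw [hkdef, Nat.one_le_ceil_iff]
    have h1α : (0:ℝ) < 1 - α := by linarith
    positivity
  -- the rank events
  set E : Fin (M + 1) → Set Ω :=
    fun j => {ω | Set.ncard {i : Fin (M + 1) | H i ω < H j ω} < k} with hEdef
  have hEmeas : ∀ j, MeasurableSet[mΩ] (E j) := by
    intro j
    have : E j = (fun ω => fun i => H i ω) ⁻¹'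
        {v : Fin (M + 1) → ℝ | Set.ncard {i : Fin (M + 1) | v i < v j} < k} := rfl
    rw [this]
    have hH' : ∀ i, @Measurable Ω ℝ mΩ _ (H i) := fun i => hH i
    exact (measurable_pi_lambda _ fun i => hH' i) (measurable_rank_event _ k j)
  -- the target event equals the rank event at the last coordinate
  have hEeq : {ω | H (Fin.last M) ω ≤
      orderStat (fun i : Fin M => H i.castSucc ω) k} = E (Fin.last M) := by
    ext ω
    simp only [Set.mem_setOf_eq, hEdef]
    rw [le_orderStat_iff _ hk1 hk]
    have hsets : {i : Fin (M + 1) | H i ω < H (Fin.last M) ω} =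
        Fin.castSucc '' {i : Fin M | H i.castSucc ω < H (Fin.last M) ω} := by
      ext i
      simp only [Set.mem_setOf_eq, Set.mem_image]
      constructor
      · intro hi
        have hne : i ≠ Fin.last M := by
          intro h; rw [h] at hi; exact lt_irrefl _ hi
        obtain ⟨i0, rfl⟩ := Fin.exists_castSucc_eq.2 hne
        exact ⟨i0, hi, rfl⟩
      · rintro ⟨i0, hi0, rfl⟩; exact hi0
    rw [hsets, Set.ncard_image_of_injective _ (Fin.castSucc_injective M)]
  -- conditional probabilities agree across coordinates
  have hA : MeasurableSet {v : Fin (M + 1) → ℝ |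
      Set.ncard {i : Fin (M + 1) | v i < v (Fin.last M)} < k} :=
    measurable_rank_event _ k (Fin.last M)
  have hcond : ∀ j : Fin (M + 1),
      μ[Set.indicator (E j) (fun _ => (1 : ℝ)) | m]
        =ᵐ[μ] μ[Set.indicator (E (Fin.last M)) (fun _ => (1 : ℝ)) | m] := by
    intro j
    have h := hexch (Equiv.swap j (Fin.last M)) _ hA
    have hset1 : {ω | (fun i => H ((Equiv.swap j (Fin.last M)) i) ω) ∈
        {v : Fin (M + 1) → ℝ | Set.ncard {i : Fin (M + 1) | v i < v (Fin.last M)} < k}}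
        = E j := by
      ext ω
      simp only [Set.mem_setOf_eq, hEdef, Equiv.swap_apply_right]
      have : {i : Fin (M + 1) | H ((Equiv.swap j (Fin.last M)) i) ω < H j ω} =
          (Equiv.swap j (Fin.last M)).symm '' {i : Fin (M + 1) | H i ω < H j ω} := by
        ext i
        simp only [Set.mem_setOf_eq, Set.mem_image]
        constructor
        · intro hi
          exact ⟨(Equiv.swap j (Fin.last M)) i, hi, Equiv.symm_apply_apply _ _⟩
        · rintro ⟨i', hi', rfl⟩
          simpa using hi'
      rw [this, Set.ncard_image_of_injective _ (Equiv.injective _)]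
    have hset2 : {ω | (fun i => H i ω) ∈
        {v : Fin (M + 1) → ℝ | Set.ncard {i : Fin (M + 1) | v i < v (Fin.last M)} < k}}
        = E (Fin.last M) := rfl
    rw [hset1, hset2] at h
    exact h
  -- integrability
  have hint : ∀ j : Fin (M + 1),
      Integrable (Set.indicator (E j) (fun _ => (1 : ℝ))) μ :=
    fun j => (integrable_const (1 : ℝ)).indicator (hEmeas j)
  -- pointwise counting bound
  have hptwise : ∀ ω, (k : ℝ) ≤
      ∑ j : Fin (M + 1), Set.indicator (E j) (fun _ => (1 : ℝ)) ω := by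
    intro ω
    have hcount := many_low_rank (fun i => H i ω) (show k ≤ M + 1 by omega)
    have hsum : ∑ j : Fin (M + 1), Set.indicator (E j) (fun _ => (1 : ℝ)) ω
        = ((Finset.univ.filter (fun j : Fin (M + 1) => ω ∈ E j)).card : ℝ) := by
      rw [Finset.card_filter]
      push_cast
      refine Finset.sum_congr rfl fun j _ => ?_
      by_cases hj : ω ∈ E j <;> simp [Set.indicator, hj]
    rw [hsum]
    have : Set.ncard {j : Fin (M + 1) | ω ∈ E j} =
        (Finset.univ.filter (fun j : Fin (M + 1) => ω ∈ E j)).card :=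
      ncard_setOf_eq_card_filter _
    have hle : k ≤ (Finset.univ.filter (fun j : Fin (M + 1) => ω ∈ E j)).card := by
      rw [← this]
      exact hcount
    exact_mod_cast hle
  -- conditional expectation bound
  set g := μ[Set.indicator (E (Fin.last M)) (fun _ => (1 : ℝ)) | m] with hg
  set F : Ω → ℝ := ∑ j : Fin (M + 1), Set.indicator (E j) (fun _ => (1 : ℝ)) with hF
  have hptwiseF : ∀ ω, (k : ℝ) ≤ F ω := by
    intro ω
    rw [hF, Finset.sum_apply]
    exact hptwise ω
  have hae : (fun _ => (1 - α : ℝ)) ≤ᵐ[μ] g := by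
    have h1 : μ[F | m] =ᵐ[μ]
        ∑ j : Fin (M + 1), μ[Set.indicator (E j) (fun _ => (1 : ℝ)) | m] :=
      condExp_finsetSum (fun j _ => hint j) m
    have h2 : μ[(fun _ => (k : ℝ)) | m] ≤ᵐ[μ] μ[F | m] :=
      condExp_mono (integrable_const _)
        (integrable_finset_sum' _ fun j _ => hint j)
        (Filter.Eventually.of_forall hptwiseF)
    rw [condExp_const hm] at h2
    have hall : ∀ᵐ ω ∂μ, ∀ j : Fin (M + 1),
        (μ[Set.indicator (E j) (fun _ => (1 : ℝ)) | m]) ω = g ω := by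
      rw [ae_all_iff]
      exact fun j => hcond j
    filter_upwards [h1, h2, hall] with ω h1ω h2ω hallω
    have hsum : (∑ j : Fin (M + 1),
        μ[Set.indicator (E j) (fun _ => (1 : ℝ)) | m]) ω = ((M : ℝ) + 1) * g ω := by
      rw [Finset.sum_apply, Finset.sum_congr rfl fun j _ => hallω j,
        Finset.sum_const, Finset.card_univ, Fintype.card_fin, nsmul_eq_mul]
      push_cast
      ring
    have hkineq : (k : ℝ) ≤ ((M : ℝ) + 1) * g ω := by
      calc (k : ℝ) ≤ (μ[F | m]) ω := h2ω
        _ = _ := h1ω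
        _ = _ := hsum
    have hMpos : (0 : ℝ) < (M : ℝ) + 1 := by positivity
    have hkge : ((M : ℝ) + 1) * (1 - α) ≤ (k : ℝ) := Nat.le_ceil _
    nlinarith
  have hfirst : (fun _ => (1 - α : ℝ)) ≤ᵐ[μ]
      μ[Set.indicator
          {ω | H (Fin.last M) ω ≤
            orderStat (fun i : Fin M => H i.castSucc ω) k}
          (fun _ => (1 : ℝ)) | m] := by
    rw [hEeq]
    exact hae
  refine ⟨hfirst, ?_⟩
  -- unconditional bound
  have hEq2 : {ω | H (Fin.last M) ω ≤
      orderStat (fun i : Fin M => H i.castSucc ω) k} = E (Fin.last M) := hEeq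
  rw [hEq2]
  have hintg : ∫ ω, Set.indicator (E (Fin.last M)) (fun _ => (1 : ℝ)) ω ∂μ
      = (μ (E (Fin.last M))).toReal := by
    rw [integral_indicator_const (1 : ℝ) (hEmeas (Fin.last M))]
    simp [measureReal_def]
  have hintcond : ∫ ω, g ω ∂μ
      = ∫ ω, Set.indicator (E (Fin.last M)) (fun _ => (1 : ℝ)) ω ∂μ :=
    integral_condExp hm
  have hlow : (1 - α : ℝ) ≤ ∫ ω, g ω ∂μ := by
    have := integral_mono_ae (integrable_const (1 - α : ℝ)) integrable_condExp hae
    simpa using this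
  have : (1 - α : ℝ) ≤ (μ (E (Fin.last M))).toReal := by
    rw [← hintg, ← hintcond]; exact hlow
  exact ENNReal.ofReal_le_of_le_toReal this
end
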